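/- Assume Σ_A is nonempty and let g : Σ_A → ℝ be continuous. Suppose there is an integer m ≥ 1 such that the Birkhoff sum g_m = Σ_{j=0}^{m−1} g∘σ_A^j satisfies inf_{ξ ∈ Σ_A} g_m(ξ) > 0. Then for all real numbers ρ₁ > ρ₂ > 0, (ρ₁ − ρ₂) · (inf_{ξ ∈ Σ_A} g_m(ξ))/m ≤ P_{σ_A}(−ρ₂·g) − P_{σ_A}(−ρ₁·g) ≤ (ρ₁ − ρ₂) · (sup_{ξ ∈ Σ_A} g_m(ξ))/m. Consequently, the function ρ ↦ P_{σ_A}(−ρ·g) is continuous and strictly decreasing on (0,∞) and tends to −∞ as ρ → ∞. -/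

import Mathlib

open scoped Classical

/-- The distance on the full shift space `Σ = ℕ → Fin k`:
`d(ξ,ξ') = exp(-(first index where they differ))`, and `0` if `ξ = ξ'`. -/
noncomputable def dSigma {k : ℕ} (ξ ξ' : ℕ → Fin k) : ℝ :=
  if ξ = ξ' then 0 else Real.exp (-(PiNat.firstDiff ξ ξ' : ℝ))

lemma dSigma_self {k : ℕ} (ξ : ℕ → Fin k) : dSigma ξ ξ = 0 := by simp [dSigma]

lemma dSigma_nonneg {k : ℕ} (ξ ξ' : ℕ → Fin k) : 0 ≤ dSigma ξ ξ' := by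
  unfold dSigma
  split
  · exact le_refl 0
  · positivity

/-- `(Σ, d_Σ)` as a metric space. -/
noncomputable instance sigmaMetricSpace (k : ℕ) : MetricSpace (ℕ → Fin k) where
  dist := dSigma
  dist_self := dSigma_self
  dist_comm ξ ξ' := by
    unfold dSigma
    rcases eq_or_ne ξ ξ' with h | h
    · simp [h]
    · simp [h, h.symm, PiNat.firstDiff_comm]
  dist_triangle x y z := by
    show dSigma x z ≤ dSigma x y + dSigma y z
    rcases eq_or_ne x y with hxy | hxy
    · subst hxy; rw [dSigma_self, zero_add]
    rcases eq_or_ne y z with hyz | hyz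
    · subst hyz; rw [dSigma_self, add_zero]
    rcases eq_or_ne x z with hxz | hxz
    · subst hxz; rw [dSigma_self]
      exact add_nonneg (dSigma_nonneg _ _) (dSigma_nonneg _ _)
    have hmin := PiNat.min_firstDiff_le x y z hxz
    unfold dSigma
    rw [if_neg hxz, if_neg hxy, if_neg hyz]
    have h1 : Real.exp (-(PiNat.firstDiff x z : ℝ)) ≤
        max (Real.exp (-(PiNat.firstDiff x y : ℝ)))
            (Real.exp (-(PiNat.firstDiff y z : ℝ))) := by
      rcases min_le_iff.1 hmin with h | h
      · exact le_max_of_le_left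
          (Real.exp_le_exp.2 (neg_le_neg (by exact_mod_cast h)))
      · exact le_max_of_le_right
          (Real.exp_le_exp.2 (neg_le_neg (by exact_mod_cast h)))
    refine h1.trans (max_le ?_ ?_)
    · linarith [(Real.exp_pos (-(PiNat.firstDiff y z : ℝ)))]
    · linarith [(Real.exp_pos (-(PiNat.firstDiff x y : ℝ)))]
  eq_of_dist_eq_zero := by
    intro x y h
    by_contra hne
    simp only [dSigma, if_neg hne] at h
    exact (Real.exp_pos _).ne' h

/-- The shift map `σ(ξ)(m) = ξ(m+1)` on `Σ = ℕ → Fin k`. -/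
def shift {k : ℕ} (ξ : ℕ → Fin k) : ℕ → Fin k := fun m => ξ (m + 1)

/-- The subshift of finite type `Σ_A` associated with a 0-1 matrix `A`:
sequences with `A (ξ (m+1)) (ξ m) = 1` for all `m`. -/
def SigmaA {k : ℕ} (A : Matrix (Fin k) (Fin k) ℕ) : Set (ℕ → Fin k) :=
  {ξ | ∀ m : ℕ, A (ξ (m + 1)) (ξ m) = 1}

/-- `σ_A`, the restriction of the shift to `Σ_A`. -/
def shiftA {k : ℕ} (A : Matrix (Fin k) (Fin k) ℕ) (ξ : SigmaA A) : SigmaA A :=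
  ⟨shift ξ.1, fun m => ξ.2 (m + 1)⟩

/-- The projection `π_{A,m}` sending `ξ ∈ Σ_A` to the word `(ξ(0), …, ξ(m-1))`. -/
def projWord {k : ℕ} (A : Matrix (Fin k) (Fin k) ℕ) (m : ℕ) (ξ : SigmaA A) :
    Fin m → Fin k := fun j => ξ.1 j

/-- The set `Σ_{A,m}` of admissible words of length `m`, as a finset. -/
noncomputable def words {k : ℕ} (A : Matrix (Fin k) (Fin k) ℕ) (m : ℕ) :
    Finset (Fin m → Fin k) :=
  Set.Finite.toFinset (Set.toFinite (Set.range (projWord A m)))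

/-- The Birkhoff sum `Σ_{j=0}^{m-1} g ∘ σ_A^j`. -/
noncomputable def birkhoff {k : ℕ} (A : Matrix (Fin k) (Fin k) ℕ)
    (g : SigmaA A → ℝ) (m : ℕ) (ξ : SigmaA A) : ℝ :=
  ∑ j ∈ Finset.range m, g ((shiftA A)^[j] ξ)

/-- `a_m(g) = log Σ_{w ∈ Σ_{A,m}} exp (sup of the Birkhoff sums over the fiber of w)`. -/
noncomputable def pressureSeq {k : ℕ} (A : Matrix (Fin k) (Fin k) ℕ)
    (g : SigmaA A → ℝ) (m : ℕ) : ℝ :=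
  Real.log (∑ w ∈ words A m,
    Real.exp (⨆ ξ : {ξ : SigmaA A // projWord A m ξ = w}, birkhoff A g m ξ.1))

/-- The topological pressure `P_{σ_A}(g) = lim_m a_m(g)/m`. -/
noncomputable def pressure {k : ℕ} (A : Matrix (Fin k) (Fin k) ℕ)
    (g : SigmaA A → ℝ) : ℝ :=
  Filter.limUnder Filter.atTop (fun m : ℕ => pressureSeq A g m / m)

/-- The cylinder `C_i = {ξ ∈ Σ_A | ξ(0) = i}`. -/
def cyl {k : ℕ} (A : Matrix (Fin k) (Fin k) ℕ) (i : Fin k) : Set (SigmaA A) :=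
  {ξ | ξ.1 0 = i}

/-- A function on `Σ_A` is Hölder continuous if there are `C > 0` and `α ∈ (0,1]`
with `|g ξ - g ξ'| ≤ C ⬝ d_Σ(ξ,ξ')^α` for all `ξ, ξ'`. -/
def IsHolder {k : ℕ} (A : Matrix (Fin k) (Fin k) ℕ) (g : SigmaA A → ℝ) : Prop :=
  ∃ C > (0:ℝ), ∃ α ∈ Set.Ioc (0:ℝ) 1,
    ∀ ξ ξ' : SigmaA A, |g ξ - g ξ'| ≤ C * dist ξ ξ' ^ α

/-! Cutting an orbit segment of length `n` into blocks of length `m` shows that the Birkhoff sums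
grow linearly: `n · inf g_m / m - C ≤ g_n ≤ n · sup g_m / m + C`. The Birkhoff sums of `-ρ₂ g` and
`-ρ₁ g` differ by `(ρ₁ - ρ₂) g_n`, so the same holds, up to the factor `ρ₁ - ρ₂`, for the
difference `a_n(-ρ₂ g) - a_n(-ρ₁ g)`; dividing by `n` and letting `n → ∞` (the limit exists by
Fekete's lemma, since `a_n` is subadditive) gives the two bounds. The upper bound makes
`ρ ↦ P(-ρ g)` Lipschitz, and the lower one, with `inf g_m > 0`, makes it decrease at least
linearly. -/

open Filter Topology Finset Real

lemma log_sum_exp_le_add {ι : Type*} {s : Finset ι} (hs : s.Nonempty) {a b : ι → ℝ} {c : ℝ}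
    (h : ∀ i ∈ s, a i ≤ b i + c) :
    log (∑ i ∈ s, exp (a i)) ≤ log (∑ i ∈ s, exp (b i)) + c := by
  have hpos : 0 < ∑ i ∈ s, exp (b i) := sum_pos (fun _ _ => exp_pos _) hs
  calc log (∑ i ∈ s, exp (a i)) ≤ log (exp c * ∑ i ∈ s, exp (b i)) := by
        refine log_le_log (sum_pos (fun _ _ => exp_pos _) hs) ?_
        rw [mul_sum]
        exact sum_le_sum fun i hi => by rw [← exp_add, add_comm]; exact exp_le_exp.2 (h i hi)
    _ = log (∑ i ∈ s, exp (b i)) + c := by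
        rw [log_mul (exp_ne_zero c) hpos.ne', log_exp, add_comm]

lemma le_log_sum_exp {ι : Type*} {s : Finset ι} {a : ι → ℝ} {i : ι} (hi : i ∈ s) :
    a i ≤ log (∑ j ∈ s, exp (a j)) :=
  calc a i = log (exp (a i)) := (log_exp _).symm
    _ ≤ log (∑ j ∈ s, exp (a j)) :=
      log_le_log (exp_pos _) (single_le_sum (fun j _ => (exp_pos (a j)).le) hi)

lemma le_add_of_tendsto_div_of_le {u v : ℕ → ℝ} {U V c D : ℝ}
    (hu : Tendsto (fun n : ℕ => u n / n) atTop (𝓝 U))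
    (hv : Tendsto (fun n : ℕ => v n / n) atTop (𝓝 V))
    (h : ∀ n, u n ≤ v n + (c * n + D)) : U ≤ V + c := by
  have hw : Tendsto (fun n : ℕ => v n / n + c + D / n) atTop (𝓝 (V + c + 0)) :=
    (hv.add_const c).add (tendsto_const_div_atTop_nhds_zero_nat D)
  rw [add_zero] at hw
  refine le_of_tendsto_of_tendsto hu hw ?_
  filter_upwards [eventually_gt_atTop 0] with n hn
  have hn' : (0 : ℝ) < n := by exact_mod_cast hn
  calc u n / n ≤ (v n + (c * n + D)) / n := by gcongr; exact h n
    _ = v n / n + c + D / n := by field_simp; ring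

section

variable {φ : ℝ → ℝ} {a : ℝ}

lemma strictAntiOn_of_mul_le_sub {s : Set ℝ} (ha : 0 < a)
    (h : ∀ x ∈ s, ∀ y ∈ s, y < x → (x - y) * a ≤ φ y - φ x) : StrictAntiOn φ s :=
  fun y hy x hx hyx => by nlinarith [h x hx y hy hyx, mul_pos (sub_pos.2 hyx) ha]

lemma lipschitzOnWith_of_sub_le {s : Set ℝ} {b : ℝ} (hanti : AntitoneOn φ s)
    (h : ∀ x ∈ s, ∀ y ∈ s, y < x → φ y - φ x ≤ (x - y) * b) :
    LipschitzOnWith b.toNNReal φ s := by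
  refine LipschitzOnWith.of_le_add_mul _ fun x hx y hy => ?_
  rw [Real.dist_eq]
  rcases le_or_gt y x with hyx | hxy
  · have := hanti hy hx hyx
    have : (0 : ℝ) ≤ b.toNNReal * |x - y| := by positivity
    linarith
  · have := h y hy x hx hxy
    have : (y - x) * b ≤ b.toNNReal * |x - y| := by
      rw [abs_sub_comm, abs_of_pos (sub_pos.2 hxy), mul_comm (b.toNNReal : ℝ)]
      exact mul_le_mul_of_nonneg_left (le_coe_toNNReal b) (sub_pos.2 hxy).le
    linarith

lemma tendsto_atBot_of_mul_le_sub {x₀ : ℝ} (ha : 0 < a)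
    (h : ∀ x, x₀ < x → (x - x₀) * a ≤ φ x₀ - φ x) : Tendsto φ atTop atBot := by
  have hlin : Tendsto (fun x => φ x₀ - (x - x₀) * a) atTop atBot :=
    tendsto_atBot_add_const_left _ _ <| tendsto_neg_atTop_atBot.comp <|
      (tendsto_atTop_add_const_right _ _ tendsto_id).atTop_mul_const ha
  exact tendsto_atBot_mono' _ ((eventually_gt_atTop x₀).mono fun x hx => by linarith [h x hx]) hlin

end

section Shift

variable {k : ℕ} {A : Matrix (Fin k) (Fin k) ℕ}

lemma isClosed_sigmaA : IsClosed (SigmaA A) := by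
  simp only [SigmaA, Set.ofPred_forall]
  refine isClosed_iInter fun m => ?_
  have hc : Continuous fun ξ : ℕ → Fin k => A (ξ (m + 1)) (ξ m) := by fun_prop
  exact isClosed_eq hc continuous_const

instance : CompactSpace (SigmaA A) :=
  isCompact_iff_compactSpace.mp isClosed_sigmaA.isCompact

lemma exists_abs_le_of_continuous {f : SigmaA A → ℝ} (hf : Continuous f) :
    ∃ B, ∀ ξ, |f ξ| ≤ B := by
  obtain ⟨B, hB⟩ := isCompact_univ.exists_bound_of_continuousOn hf.continuousOn
  exact ⟨B, fun ξ => hB ξ (Set.mem_univ ξ)⟩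

lemma shiftA_iterate_apply (p : ℕ) (ξ : SigmaA A) (i : ℕ) :
    ((shiftA A)^[p] ξ).1 i = ξ.1 (i + p) := by
  induction p generalizing ξ with
  | zero => rfl
  | succ p ih => exact ih (shiftA A ξ)

lemma appendEquiv_symm_projWord (p q : ℕ) (ξ : SigmaA A) :
    (Fin.appendEquiv p q).symm (projWord A (p + q) ξ) =
      (projWord A p ξ, projWord A q ((shiftA A)^[p] ξ)) := by
  ext j <;> simp [projWord, shiftA_iterate_apply, add_comm]

lemma mem_words (n : ℕ) (ξ : SigmaA A) : projWord A n ξ ∈ words A n := by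
  simp [words]

lemma exists_projWord_eq_of_mem_words {n : ℕ} {w : Fin n → Fin k} (hw : w ∈ words A n) :
    ∃ ξ, projWord A n ξ = w := by
  simpa [words] using hw

lemma words_nonempty (hne : (SigmaA A).Nonempty) (n : ℕ) : (words A n).Nonempty :=
  ⟨_, mem_words n ⟨hne.some, hne.some_mem⟩⟩

end Shift

section Birkhoff

variable {k : ℕ} {A : Matrix (Fin k) (Fin k) ℕ}

lemma birkhoff_add (f : SigmaA A → ℝ) (p q : ℕ) (ξ : SigmaA A) :
    birkhoff A f (p + q) ξ = birkhoff A f p ξ + birkhoff A f q ((shiftA A)^[p] ξ) := by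
  rw [birkhoff, birkhoff, birkhoff, sum_range_add]
  congr 1
  exact sum_congr rfl fun j _ => by rw [add_comm, Function.iterate_add_apply]

lemma birkhoff_const_mul (c : ℝ) (f : SigmaA A → ℝ) (n : ℕ) (ξ : SigmaA A) :
    birkhoff A (fun ξ' => c * f ξ') n ξ = c * birkhoff A f n ξ := by
  simp [birkhoff, mul_sum]

lemma birkhoff_neg (f : SigmaA A → ℝ) (n : ℕ) (ξ : SigmaA A) :
    birkhoff A (fun ξ' => -f ξ') n ξ = -birkhoff A f n ξ := by
  simp [birkhoff]

lemma abs_birkhoff_le {f : SigmaA A → ℝ} {B : ℝ} (hB : ∀ ξ, |f ξ| ≤ B) (n : ℕ)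
    (ξ : SigmaA A) : |birkhoff A f n ξ| ≤ n * B :=
  calc |birkhoff A f n ξ| ≤ ∑ j ∈ range n, |f ((shiftA A)^[j] ξ)| := abs_sum_le_sum_abs _ _
    _ ≤ ∑ _j ∈ range n, B := sum_le_sum fun _ _ => hB _
    _ = n * B := by simp

variable {f : SigmaA A → ℝ} {B : ℝ} {m : ℕ}

lemma birkhoff_ge_of_le_birkhoff {I : ℝ} (hm : 0 < m) (hB : ∀ ξ, |f ξ| ≤ B)
    (hI : ∀ ξ, I ≤ birkhoff A f m ξ) (n : ℕ) (ξ : SigmaA A) :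
    n * I / m - (m * B + |I|) ≤ birkhoff A f n ξ := by
  induction n using Nat.strong_induction_on generalizing ξ with
  | _ n ih =>
  have hm' : (0 : ℝ) < m := by exact_mod_cast hm
  rcases lt_or_ge n m with hnm | hmn
  · have hnm' : (n : ℝ) ≤ m := by exact_mod_cast hnm.le
    have hnI : (n : ℝ) * I / m ≤ |I| := by
      rw [div_le_iff₀ hm']
      nlinarith [le_abs_self I, abs_nonneg I, (n.cast_nonneg : (0 : ℝ) ≤ n)]
    have hB0 : 0 ≤ B := (abs_nonneg _).trans (hB ξ)
    have := neg_le_of_abs_le (abs_birkhoff_le hB n ξ)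
    nlinarith
  · obtain ⟨j, rfl⟩ := Nat.exists_eq_add_of_le hmn
    have hj := ih j (by omega) ((shiftA A)^[m] ξ)
    have hsplit : ((m + j : ℕ) : ℝ) * I / m = I + j * I / m := by
      push_cast; field_simp
    rw [birkhoff_add, hsplit]
    linarith [hI ξ]

lemma birkhoff_le_of_birkhoff_le {S : ℝ} (hm : 0 < m) (hB : ∀ ξ, |f ξ| ≤ B)
    (hS : ∀ ξ, birkhoff A f m ξ ≤ S) (n : ℕ) (ξ : SigmaA A) :
    birkhoff A f n ξ ≤ n * S / m + (m * B + |S|) := by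
  have := birkhoff_ge_of_le_birkhoff (f := fun ξ => -f ξ) (I := -S) hm (by simpa using hB)
    (fun ξ => by simpa [birkhoff_neg] using hS ξ) n ξ
  rw [birkhoff_neg, abs_neg, mul_neg, neg_div] at this
  linarith

lemma bddBelow_range_birkhoff (hB : ∀ ξ, |f ξ| ≤ B) (n : ℕ) :
    BddBelow (Set.range (birkhoff A f n)) :=
  ⟨-(n * B), by rintro _ ⟨ξ, rfl⟩; exact neg_le_of_abs_le (abs_birkhoff_le hB n ξ)⟩

lemma bddAbove_range_birkhoff (hB : ∀ ξ, |f ξ| ≤ B) (n : ℕ) :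
    BddAbove (Set.range (birkhoff A f n)) :=
  ⟨n * B, by rintro _ ⟨ξ, rfl⟩; exact le_of_abs_le (abs_birkhoff_le hB n ξ)⟩

end Birkhoff

section Pressure

variable {k : ℕ} {A : Matrix (Fin k) (Fin k) ℕ}

noncomputable def cylinderSup (A : Matrix (Fin k) (Fin k) ℕ) (f : SigmaA A → ℝ) (n : ℕ)
    (w : Fin n → Fin k) : ℝ :=
  ⨆ ξ : {ξ : SigmaA A // projWord A n ξ = w}, birkhoff A f n ξ.1

lemma pressureSeq_eq (f : SigmaA A → ℝ) (n : ℕ) :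
    pressureSeq A f n = log (∑ w ∈ words A n, exp (cylinderSup A f n w)) := rfl

variable {f : SigmaA A → ℝ} {B : ℝ}

lemma le_cylinderSup (hB : ∀ ξ, |f ξ| ≤ B) (n : ℕ) (ξ : SigmaA A) :
    birkhoff A f n ξ ≤ cylinderSup A f n (projWord A n ξ) :=
  le_ciSup ((bddAbove_range_birkhoff hB n).mono (by rintro _ ⟨ξ', rfl⟩; exact ⟨ξ'.1, rfl⟩))
    (⟨ξ, rfl⟩ : {ξ' : SigmaA A // projWord A n ξ' = projWord A n ξ})

lemma cylinderSup_le {n : ℕ} {w : Fin n → Fin k} {c : ℝ} (hw : w ∈ words A n)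
    (h : ∀ ξ, projWord A n ξ = w → birkhoff A f n ξ ≤ c) : cylinderSup A f n w ≤ c := by
  obtain ⟨ξ, hξ⟩ := exists_projWord_eq_of_mem_words hw
  have : Nonempty {ξ : SigmaA A // projWord A n ξ = w} := ⟨⟨ξ, hξ⟩⟩
  exact ciSup_le fun ξ => h ξ.1 ξ.2

lemma neg_mul_le_pressureSeq (hne : (SigmaA A).Nonempty) (hB : ∀ ξ, |f ξ| ≤ B) (n : ℕ) :
    -(n * B) ≤ pressureSeq A f n := by
  let ξ : SigmaA A := ⟨hne.some, hne.some_mem⟩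
  calc -(n * B) ≤ birkhoff A f n ξ := neg_le_of_abs_le (abs_birkhoff_le hB n ξ)
    _ ≤ cylinderSup A f n (projWord A n ξ) := le_cylinderSup hB n ξ
    _ ≤ pressureSeq A f n := le_log_sum_exp (mem_words n ξ)

lemma pressureSeq_add_le (hne : (SigmaA A).Nonempty) (hB : ∀ ξ, |f ξ| ≤ B) (p q : ℕ) :
    pressureSeq A f (p + q) ≤ pressureSeq A f p + pressureSeq A f q := by
  let e := (Fin.appendEquiv (α := Fin k) p q).symm
  have hsup : ∀ w ∈ words A (p + q),
      cylinderSup A f (p + q) w ≤ cylinderSup A f p (e w).1 + cylinderSup A f q (e w).2 :=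
    fun w hw => cylinderSup_le hw fun ξ hξ => by
      rw [birkhoff_add, ← hξ, appendEquiv_symm_projWord]
      exact add_le_add (le_cylinderSup hB p ξ) (le_cylinderSup hB q _)
  have hmaps : ∀ w ∈ words A (p + q), e w ∈ words A p ×ˢ words A q := fun w hw => by
    obtain ⟨ξ, rfl⟩ := exists_projWord_eq_of_mem_words hw
    rw [appendEquiv_symm_projWord]
    exact mem_product.2 ⟨mem_words _ _, mem_words _ _⟩
  have hsum : ∑ w ∈ words A (p + q), exp (cylinderSup A f (p + q) w) ≤
      (∑ u ∈ words A p, exp (cylinderSup A f p u)) *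
        ∑ v ∈ words A q, exp (cylinderSup A f q v) := by
    rw [sum_mul_sum, ← sum_product']
    calc ∑ w ∈ words A (p + q), exp (cylinderSup A f (p + q) w)
        ≤ ∑ w ∈ words A (p + q),
            exp (cylinderSup A f p (e w).1) * exp (cylinderSup A f q (e w).2) :=
          sum_le_sum fun w hw => by rw [← exp_add]; exact exp_le_exp.2 (hsup w hw)
      _ = ∑ x ∈ (words A (p + q)).map e.toEmbedding,
            exp (cylinderSup A f p x.1) * exp (cylinderSup A f q x.2) := by
          rw [sum_map]; rfl
      _ ≤ ∑ x ∈ words A p ×ˢ words A q,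
            exp (cylinderSup A f p x.1) * exp (cylinderSup A f q x.2) := by
          refine sum_le_sum_of_subset_of_nonneg (fun x hx => ?_) fun _ _ _ => by positivity
          obtain ⟨w, hw, rfl⟩ := mem_map.1 hx
          exact hmaps w hw
  have hpos : ∀ n, 0 < ∑ w ∈ words A n, exp (cylinderSup A f n w) :=
    fun n => sum_pos (fun _ _ => exp_pos _) (words_nonempty hne n)
  rw [pressureSeq_eq, pressureSeq_eq, pressureSeq_eq, ← log_mul (hpos p).ne' (hpos q).ne']
  exact log_le_log (hpos _) hsum

lemma tendsto_pressureSeq_div (hne : (SigmaA A).Nonempty) (hf : Continuous f) :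
    Tendsto (fun n : ℕ => pressureSeq A f n / n) atTop (𝓝 (pressure A f)) := by
  obtain ⟨B, hB⟩ := exists_abs_le_of_continuous hf
  have hsub : Subadditive (pressureSeq A f) := pressureSeq_add_le hne hB
  have hbdd : BddBelow (Set.range fun n : ℕ => pressureSeq A f n / n) := by
    refine ⟨min (-B) 0, ?_⟩
    rintro _ ⟨n, rfl⟩
    rcases n.eq_zero_or_pos with rfl | hn
    · simp
    · rw [le_div_iff₀ (by exact_mod_cast hn)]
      nlinarith [neg_mul_le_pressureSeq hne hB n, min_le_left (-B) 0]
  have ht := hsub.tendsto_lim hbdd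
  rwa [pressure, ht.limUnder_eq]

lemma pressure_le_add_of_birkhoff_le (hne : (SigmaA A).Nonempty) {f₁ f₂ : SigmaA A → ℝ}
    (hf₁ : Continuous f₁) (hf₂ : Continuous f₂) {c D : ℝ}
    (h : ∀ n ξ, birkhoff A f₁ n ξ ≤ birkhoff A f₂ n ξ + (c * n + D)) :
    pressure A f₁ ≤ pressure A f₂ + c := by
  obtain ⟨B, hB⟩ := exists_abs_le_of_continuous hf₂
  refine le_add_of_tendsto_div_of_le (D := D) (tendsto_pressureSeq_div hne hf₁)
    (tendsto_pressureSeq_div hne hf₂) fun n => ?_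
  refine log_sum_exp_le_add (words_nonempty hne n) fun w hw => cylinderSup_le hw fun ξ hξ => ?_
  rw [← hξ]
  exact (h n ξ).trans (add_le_add_left (le_cylinderSup hB n ξ) _)

end Pressure

section PressureOfMultiples

variable {k : ℕ} {A : Matrix (Fin k) (Fin k) ℕ} {g : SigmaA A → ℝ} {m : ℕ}

lemma mul_iInf_birkhoff_div_le_pressure_sub (hne : (SigmaA A).Nonempty) (hg : Continuous g)
    (hm : 0 < m) {ρ₁ ρ₂ : ℝ} (h : ρ₂ ≤ ρ₁) :
    (ρ₁ - ρ₂) * (⨅ ξ : SigmaA A, birkhoff A g m ξ) / m ≤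
      pressure A (fun ξ => -ρ₂ * g ξ) - pressure A (fun ξ => -ρ₁ * g ξ) := by
  obtain ⟨B, hB⟩ := exists_abs_le_of_continuous hg
  set I := ⨅ ξ : SigmaA A, birkhoff A g m ξ
  have hI : ∀ ξ, I ≤ birkhoff A g m ξ := ciInf_le (bddBelow_range_birkhoff hB m)
  have hP := pressure_le_add_of_birkhoff_le hne (f₁ := fun ξ => -ρ₁ * g ξ)
    (f₂ := fun ξ => -ρ₂ * g ξ) (by fun_prop) (by fun_prop)
    (c := -((ρ₁ - ρ₂) * I / m)) (D := (ρ₁ - ρ₂) * (m * B + |I|)) fun n ξ => by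
      rw [birkhoff_const_mul, birkhoff_const_mul]
      linear_combination mul_le_mul_of_nonneg_left (birkhoff_ge_of_le_birkhoff hm hB hI n ξ)
        (sub_nonneg.2 h)
  linarith [hP]

lemma pressure_sub_le_mul_iSup_birkhoff_div (hne : (SigmaA A).Nonempty) (hg : Continuous g)
    (hm : 0 < m) {ρ₁ ρ₂ : ℝ} (h : ρ₂ ≤ ρ₁) :
    pressure A (fun ξ => -ρ₂ * g ξ) - pressure A (fun ξ => -ρ₁ * g ξ) ≤
      (ρ₁ - ρ₂) * (⨆ ξ : SigmaA A, birkhoff A g m ξ) / m := by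
  obtain ⟨B, hB⟩ := exists_abs_le_of_continuous hg
  set S := ⨆ ξ : SigmaA A, birkhoff A g m ξ
  have hS : ∀ ξ, birkhoff A g m ξ ≤ S := le_ciSup (bddAbove_range_birkhoff hB m)
  have hP := pressure_le_add_of_birkhoff_le hne (f₁ := fun ξ => -ρ₂ * g ξ)
    (f₂ := fun ξ => -ρ₁ * g ξ) (by fun_prop) (by fun_prop)
    (c := (ρ₁ - ρ₂) * S / m) (D := (ρ₁ - ρ₂) * (m * B + |S|)) fun n ξ => by
      rw [birkhoff_const_mul, birkhoff_const_mul]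
      linear_combination mul_le_mul_of_nonneg_left (birkhoff_le_of_birkhoff_le hm hB hS n ξ)
        (sub_nonneg.2 h)
  linarith [hP]

end PressureOfMultiples

theorem statement_6_general (k : ℕ) (A : Matrix (Fin k) (Fin k) ℕ)
    (hne : (SigmaA A).Nonempty)
    (g : SigmaA A → ℝ) (hg : Continuous g)
    (m : ℕ) (hm : 1 ≤ m) (hpos : 0 < ⨅ ξ : SigmaA A, birkhoff A g m ξ) :
    (∀ ρ₁ ρ₂ : ℝ, 0 < ρ₂ → ρ₂ < ρ₁ →
      (ρ₁ - ρ₂) * (⨅ ξ : SigmaA A, birkhoff A g m ξ) / m ≤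
          pressure A (fun ξ => -ρ₂ * g ξ) - pressure A (fun ξ => -ρ₁ * g ξ) ∧
      pressure A (fun ξ => -ρ₂ * g ξ) - pressure A (fun ξ => -ρ₁ * g ξ) ≤
          (ρ₁ - ρ₂) * (⨆ ξ : SigmaA A, birkhoff A g m ξ) / m) ∧
    ContinuousOn (fun ρ : ℝ => pressure A (fun ξ => -ρ * g ξ)) (Set.Ioi 0) ∧
    StrictAntiOn (fun ρ : ℝ => pressure A (fun ξ => -ρ * g ξ)) (Set.Ioi 0) ∧
    Filter.Tendsto (fun ρ : ℝ => pressure A (fun ξ => -ρ * g ξ))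
      Filter.atTop Filter.atBot := by
  have hlower : ∀ ρ₁ ρ₂ : ℝ, ρ₂ < ρ₁ → (ρ₁ - ρ₂) * ((⨅ ξ : SigmaA A, birkhoff A g m ξ) / m) ≤
      pressure A (fun ξ => -ρ₂ * g ξ) - pressure A (fun ξ => -ρ₁ * g ξ) := fun _ _ h => by
    rw [← mul_div_assoc]; exact mul_iInf_birkhoff_div_le_pressure_sub hne hg hm h.le
  have hupper : ∀ ρ₁ ρ₂ : ℝ, ρ₂ < ρ₁ →
      pressure A (fun ξ => -ρ₂ * g ξ) - pressure A (fun ξ => -ρ₁ * g ξ) ≤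
        (ρ₁ - ρ₂) * ((⨆ ξ : SigmaA A, birkhoff A g m ξ) / m) := fun _ _ h => by
    rw [← mul_div_assoc]; exact pressure_sub_le_mul_iSup_birkhoff_div hne hg hm h.le
  have hslope : 0 < (⨅ ξ : SigmaA A, birkhoff A g m ξ) / m := div_pos hpos (by positivity)
  have hanti := strictAntiOn_of_mul_le_sub (s := Set.Ioi 0) hslope fun x _ y _ => hlower x y
  refine ⟨fun ρ₁ ρ₂ _ h => ⟨mul_iInf_birkhoff_div_le_pressure_sub hne hg hm h.le,
      pressure_sub_le_mul_iSup_birkhoff_div hne hg hm h.le⟩, ?_, hanti, ?_⟩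
  · exact (lipschitzOnWith_of_sub_le hanti.antitoneOn fun x _ y _ => hupper x y).continuousOn
  · exact tendsto_atBot_of_mul_le_sub (x₀ := 0) hslope fun x => hlower x 0

theorem statement_6 (k : ℕ) (hk : 1 ≤ k) (A : Matrix (Fin k) (Fin k) ℕ)
    (hA : ∀ i j, A i j = 0 ∨ A i j = 1) (hne : (SigmaA A).Nonempty)
    (g : SigmaA A → ℝ) (hg : Continuous g)
    (m : ℕ) (hm : 1 ≤ m) (hpos : 0 < ⨅ ξ : SigmaA A, birkhoff A g m ξ) :
    (∀ ρ₁ ρ₂ : ℝ, 0 < ρ₂ → ρ₂ < ρ₁ →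
      (ρ₁ - ρ₂) * (⨅ ξ : SigmaA A, birkhoff A g m ξ) / m ≤
          pressure A (fun ξ => -ρ₂ * g ξ) - pressure A (fun ξ => -ρ₁ * g ξ) ∧
      pressure A (fun ξ => -ρ₂ * g ξ) - pressure A (fun ξ => -ρ₁ * g ξ) ≤
          (ρ₁ - ρ₂) * (⨆ ξ : SigmaA A, birkhoff A g m ξ) / m) ∧
    ContinuousOn (fun ρ : ℝ => pressure A (fun ξ => -ρ * g ξ)) (Set.Ioi 0) ∧
    StrictAntiOn (fun ρ : ℝ => pressure A (fun ξ => -ρ * g ξ)) (Set.Ioi 0) ∧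
    Filter.Tendsto (fun ρ : ℝ => pressure A (fun ξ => -ρ * g ξ))
      Filter.atTop Filter.atBot :=
  statement_6_general k A hne g hg m hm hpos
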